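/- arXiv:2207.03732 — 2 statements merged into one kernel-verified Lean document; each statement's English description precedes it below -/
import Mathlib

section
/- Let U' be an abelian group whose torsion subgroup is cyclic of order q = p^n, and set U = U'/μ_q where μ_q is the torsion subgroup. Then for every m ≥ n there is an exact sequence 0 → μ_q → U'/(U')^{p^m} → U/U^{p^m} → 0. -/
/-- Let `U'` be an abelian group whose torsion subgroup `μ_q` is cyclic of order `q = p^n`,
and let `U = U'/μ_q`.  Then for every `m ≥ n` there is an exact sequence
`0 → μ_q → U'/(U')^{p^m} → U/U^{p^m} → 0`. -/
theorem stmt6 (p n m : ℕ) [Fact p.Prime] (hm : n ≤ m)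
    {U' : Type*} [CommGroup U']
    (hcyc : IsCyclic (CommGroup.torsion U'))
    (hq : Nat.card (CommGroup.torsion U') = p ^ n) :
    ∃ (f₁ : (CommGroup.torsion U') →*
        (U' ⧸ (powMonoidHom (p ^ m) : U' →* U').range))
      (f₂ : (U' ⧸ (powMonoidHom (p ^ m) : U' →* U').range) →*
        ((U' ⧸ CommGroup.torsion U') ⧸
          (powMonoidHom (p ^ m) : (U' ⧸ CommGroup.torsion U') →* (U' ⧸ CommGroup.torsion U')).range)),
      Function.Injective f₁ ∧ f₁.range = f₂.ker ∧ Function.Surjective f₂ := by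
  classical
  set T := CommGroup.torsion U' with hT
  set N : Subgroup U' := (powMonoidHom (p ^ m) : U' →* U').range with hN
  set N' : Subgroup (U' ⧸ T) :=
    (powMonoidHom (p ^ m) : (U' ⧸ T) →* (U' ⧸ T)).range with hN'
  have hlift : ∀ x ∈ N, ((QuotientGroup.mk' N').comp (QuotientGroup.mk' T)) x = 1 := by
    rintro x ⟨y, rfl⟩
    simp only [MonoidHom.comp_apply, QuotientGroup.mk'_apply]
    rw [QuotientGroup.eq_one_iff]
    exact ⟨QuotientGroup.mk y, by simp [powMonoidHom_apply]⟩
  refine ⟨(QuotientGroup.mk' N).comp T.subtype,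
    QuotientGroup.lift N ((QuotientGroup.mk' N').comp (QuotientGroup.mk' T)) (fun x hx => (MonoidHom.mem_ker).mpr (hlift x hx)), ?_, ?_, ?_⟩
  · rw [← MonoidHom.ker_eq_bot_iff, eq_bot_iff]
    rintro ⟨t, ht⟩ h
    have h1 : t ∈ N := by
      rwa [MonoidHom.mem_ker, MonoidHom.comp_apply, QuotientGroup.mk'_apply,
        Subgroup.coe_subtype, QuotientGroup.eq_one_iff] at h
    obtain ⟨y, hy⟩ := h1
    rw [powMonoidHom_apply] at hy
    have hpm : (p : ℕ) ^ m ≠ 0 := pow_ne_zero _ (Fact.out (p := p.Prime)).ne_zero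
    have hyT : y ∈ T := by
      rw [hT, CommGroup.mem_torsion]
      exact IsOfFinOrder.of_pow (hy ▸ ht) hpm
    have hord : orderOf (⟨y, hyT⟩ : T) ∣ p ^ m :=
      dvd_trans (hq ▸ orderOf_dvd_natCard _) (pow_dvd_pow p hm)
    have : (⟨y, hyT⟩ : T) ^ p ^ m = 1 := orderOf_dvd_iff_pow_eq_one.mp hord
    have hy1 : y ^ p ^ m = 1 := by
      simpa using congrArg (Subgroup.subtype T) this
    exact Subgroup.mem_bot.mpr (Subtype.ext (show t = (1:U') by rw [← hy, hy1]))
  · ext x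
    simp only [MonoidHom.mem_range, MonoidHom.mem_ker]
    constructor
    · rintro ⟨⟨t, ht⟩, rfl⟩
      have h1 : (QuotientGroup.mk t : U' ⧸ T) = 1 := (QuotientGroup.eq_one_iff t).mpr ht
      simp only [MonoidHom.comp_apply, QuotientGroup.mk'_apply, Subgroup.coe_subtype,
        QuotientGroup.lift_mk']
      rw [h1]
      simp
    · intro hx
      obtain ⟨x, rfl⟩ := QuotientGroup.mk'_surjective N x
      rw [QuotientGroup.mk'_apply, QuotientGroup.lift_mk, MonoidHom.comp_apply,
        QuotientGroup.mk'_apply, QuotientGroup.eq_one_iff] at hx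
      obtain ⟨z, hz⟩ := hx
      obtain ⟨y, rfl⟩ := QuotientGroup.mk'_surjective T z
      rw [powMonoidHom_apply, QuotientGroup.mk'_apply, ← QuotientGroup.mk_pow] at hz
      have hmem : (y ^ p ^ m)⁻¹ * x ∈ T := by
        exact QuotientGroup.eq.mp hz
      refine ⟨⟨(y ^ p ^ m)⁻¹ * x, hmem⟩, ?_⟩
      simp only [MonoidHom.comp_apply, QuotientGroup.mk'_apply, Subgroup.coe_subtype]
      rw [QuotientGroup.mk_mul]
      have : QuotientGroup.mk (s := N) ((y ^ p ^ m)⁻¹) = 1 := by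
        rw [QuotientGroup.eq_one_iff]
        exact inv_mem ⟨y, by simp [powMonoidHom_apply]⟩
      rw [this, one_mul]
  · intro b
    obtain ⟨z, rfl⟩ := QuotientGroup.mk'_surjective N' b
    obtain ⟨x, rfl⟩ := QuotientGroup.mk'_surjective T z
    exact ⟨QuotientGroup.mk x, rfl⟩
end

section
/- Let 0 → A → V → M → B → 0 be an exact sequence of modules over a ring with an endomorphism φ (commuting with the maps), where A and B are finite. Suppose ker(φ : A→A), coker(φ:A→A), ker(φ:B→B), coker(φ:B→B) satisfy |ker| = |coker| on A and on B, and suppose ker(φ) = 0 on both V and M with coker(φ:V→V) and coker(φ:M→M) finite. Then |coker(φ : V → V)| = |coker(φ : M → M)|. -/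
/-!
As `φ` is injective on `V ⊇ A` and `A` is finite, `φ` is bijective on `A`, so `ker β ⊆ φ(V)`.
Then `β` induces `β̄ : coker φ_V → coker φ_M` whose kernel and cokernel are in bijection with
`ker φ_B` and `coker φ_B` (part of the snake lemma). Since `|coker φ_V| = |ker β̄| · |im β̄|` and
`|coker φ_M| = |coker β̄| · |im β̄|`, the hypothesis `|ker φ_B| = |coker φ_B|` gives the claim.
-/

open Function QuotientAddGroup

namespace AddMonoidHom

variable {G H K : Type*} [AddCommGroup G] [AddCommGroup H] [AddCommGroup K]

theorem card_range_eq_of_ker_eq (f : G →+ H) (g : G →+ K) (h : f.ker = g.ker) :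
    Nat.card f.range = Nat.card g.range :=
  Nat.card_congr ((quotientKerEquivRange f).symm.trans
    ((quotientAddEquivOfEq h).trans (quotientKerEquivRange g))).toEquiv

theorem card_eq_of_card_ker_eq_card_coker (f : G →+ H)
    (h : Nat.card f.ker = Nat.card (H ⧸ f.range)) : Nat.card G = Nat.card H := by
  rw [AddSubgroup.card_eq_card_quotient_mul_card_addSubgroup f.ker,
    AddSubgroup.card_eq_card_quotient_mul_card_addSubgroup f.range, h,
    Nat.card_congr (quotientKerEquivRange f).toEquiv, mul_comm]

end AddMonoidHom

section CokerMap

variable {A V M B : Type*} [AddCommGroup A] [AddCommGroup V] [AddCommGroup M] [AddCommGroup B]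
  {β : V →+ M} {γ : M →+ B} {φV : V →+ V} {φM : M →+ M} {φB : B →+ B}

theorem ker_le_range_of_comm_of_finite [Finite A] {α : A →+ V} {φA : A →+ A}
    (hα : Injective α) (hexV : α.range = β.ker) (hcα : ∀ a, α (φA a) = φV (α a))
    (hVinj : Injective φV) : β.ker ≤ φV.range := by
  have hAinj : Injective φA := fun a a' h => hα <| hVinj <| by rw [← hcα, ← hcα, h]
  rw [← hexV]
  rintro _ ⟨a, rfl⟩
  obtain ⟨a', rfl⟩ := Finite.injective_iff_surjective.mp hAinj a
  exact ⟨α a', (hcα a').symm⟩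

variable (β) in
def cokerMap (hcβ : ∀ v, β (φV v) = φM (β v)) : V ⧸ φV.range →+ M ⧸ φM.range :=
  QuotientAddGroup.map _ _ β (by rintro _ ⟨u, rfl⟩; exact ⟨β u, (hcβ u).symm⟩)

@[simp]
theorem cokerMap_mk (hcβ : ∀ v, β (φV v) = φM (β v)) (v : V) :
    cokerMap β hcβ (v : V ⧸ φV.range) = (β v : M ⧸ φM.range) :=
  rfl

variable (β φM) in
/-- Through `pullbackMkFst` and `pullbackCompSnd` it parametrizes both `(cokerMap β _).ker` and
`φB.ker`, with the same kernel. -/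
def pullback : AddSubgroup (V × M) :=
  AddMonoidHom.eqLocus (β.comp (AddMonoidHom.fst V M)) (φM.comp (AddMonoidHom.snd V M))

theorem mem_pullback {p : V × M} : p ∈ pullback β φM ↔ β p.1 = φM p.2 :=
  Iff.rfl

variable (β φV φM) in
def pullbackMkFst : pullback β φM →+ V ⧸ φV.range :=
  (mk' φV.range).comp ((AddMonoidHom.fst V M).comp (pullback β φM).subtype)

variable (β γ φM) in
def pullbackCompSnd : pullback β φM →+ B :=
  (γ.comp (AddMonoidHom.snd V M)).comp (pullback β φM).subtype

theorem range_pullbackMkFst (hcβ : ∀ v, β (φV v) = φM (β v)) :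
    (pullbackMkFst β φV φM).range = (cokerMap β hcβ).ker := by
  ext x
  obtain ⟨v, rfl⟩ := mk_surjective x
  simp only [AddMonoidHom.mem_range, AddMonoidHom.mem_ker, cokerMap_mk, eq_zero_iff]
  constructor
  · rintro ⟨⟨⟨v', m⟩, hm⟩, hv⟩
    obtain ⟨u, hu⟩ := QuotientAddGroup.eq.mp hv
    refine ⟨m + β u, ?_⟩
    rw [map_add, ← hcβ, hu, ← mem_pullback.mp hm, map_add, map_neg]
    exact add_neg_cancel_left _ _
  · rintro ⟨m, hm⟩
    exact ⟨⟨(v, m), hm.symm⟩, rfl⟩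

theorem range_pullbackCompSnd (hexM : β.range = γ.ker) (hγ : Surjective γ)
    (hcγ : ∀ x, γ (φM x) = φB (γ x)) :
    (pullbackCompSnd β γ φM).range = φB.ker := by
  ext b
  constructor
  · rintro ⟨⟨⟨v, m⟩, hm⟩, rfl⟩
    show φB (γ m) = 0
    rw [← hcγ, ← mem_pullback.mp hm, ← AddMonoidHom.mem_ker, ← hexM]
    exact ⟨v, rfl⟩
  · intro hb
    obtain ⟨m, rfl⟩ := hγ b
    obtain ⟨v, hv⟩ : φM m ∈ β.range := by
      rw [hexM, AddMonoidHom.mem_ker, hcγ]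
      exact hb
    exact ⟨⟨(v, m), hv⟩, rfl⟩

theorem ker_pullbackMkFst_eq (hker : β.ker ≤ φV.range) (hexM : β.range = γ.ker)
    (hcβ : ∀ v, β (φV v) = φM (β v)) (hMinj : Injective φM) :
    (pullbackMkFst β φV φM).ker = (pullbackCompSnd β γ φM).ker := by
  ext ⟨⟨v, m⟩, hm⟩
  replace hm : β v = φM m := hm
  change (v : V ⧸ φV.range) = 0 ↔ γ m = 0
  rw [eq_zero_iff, ← AddMonoidHom.mem_ker, ← hexM]
  constructor
  · rintro ⟨u, rfl⟩
    exact ⟨u, hMinj (by rw [← hcβ, hm])⟩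
  · rintro ⟨u, rfl⟩
    have hvu : v - φV u ∈ φV.range := hker <| by
      rw [AddMonoidHom.mem_ker, map_sub, hm, hcβ, sub_self]
    simpa using add_mem hvu ⟨u, rfl⟩

theorem card_ker_cokerMap (hker : β.ker ≤ φV.range) (hexM : β.range = γ.ker)
    (hγ : Surjective γ) (hcβ : ∀ v, β (φV v) = φM (β v)) (hcγ : ∀ x, γ (φM x) = φB (γ x))
    (hMinj : Injective φM) :
    Nat.card (cokerMap β hcβ).ker = Nat.card φB.ker := by
  rw [← range_pullbackMkFst hcβ, ← range_pullbackCompSnd hexM hγ hcγ]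
  exact AddMonoidHom.card_range_eq_of_ker_eq _ _ (ker_pullbackMkFst_eq hker hexM hcβ hMinj)

theorem ker_mk_comp_eq_ker_mk_comp_mk (hexM : β.range = γ.ker) (hγ : Surjective γ)
    (hcβ : ∀ v, β (φV v) = φM (β v)) (hcγ : ∀ x, γ (φM x) = φB (γ x)) :
    ((mk' φB.range).comp γ).ker = ((mk' (cokerMap β hcβ).range).comp (mk' φM.range)).ker := by
  have hγβ (v : V) : γ (β v) = 0 := by
    rw [← AddMonoidHom.mem_ker, ← hexM]
    exact ⟨v, rfl⟩
  ext m
  simp only [AddMonoidHom.mem_ker, AddMonoidHom.comp_apply, mk'_apply, eq_zero_iff]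
  constructor
  · rintro ⟨b, hb⟩
    obtain ⟨m', rfl⟩ := hγ b
    obtain ⟨v, hv⟩ : m - φM m' ∈ β.range := by
      rw [hexM, AddMonoidHom.mem_ker, map_sub, hcγ, hb, sub_self]
    refine ⟨v, ?_⟩
    rw [cokerMap_mk, hv, mk_sub, (eq_zero_iff _).mpr (AddMonoidHom.mem_range.mpr ⟨m', rfl⟩),
      sub_zero]
  · rintro ⟨x, hx⟩
    obtain ⟨v, rfl⟩ := mk_surjective x
    obtain ⟨m', hm'⟩ := QuotientAddGroup.eq.mp hx
    refine ⟨γ m', ?_⟩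
    rw [← hcγ, hm', map_add, map_neg, hγβ, neg_zero, zero_add]

theorem card_coker_cokerMap (hexM : β.range = γ.ker) (hγ : Surjective γ)
    (hcβ : ∀ v, β (φV v) = φM (β v)) (hcγ : ∀ x, γ (φM x) = φB (γ x)) :
    Nat.card ((M ⧸ φM.range) ⧸ (cokerMap β hcβ).range) = Nat.card (B ⧸ φB.range) := by
  have hq₁ : Surjective ((mk' φB.range).comp γ) := (mk'_surjective _).comp hγ
  have hq₂ : Surjective ((mk' (cokerMap β hcβ).range).comp (mk' φM.range)) :=
    (mk'_surjective _).comp (mk'_surjective _)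
  have := AddMonoidHom.card_range_eq_of_ker_eq _ _ (ker_mk_comp_eq_ker_mk_comp_mk hexM hγ hcβ hcγ)
  rwa [AddMonoidHom.range_eq_top_of_surjective _ hq₁,
    AddMonoidHom.range_eq_top_of_surjective _ hq₂, AddSubgroup.card_top, AddSubgroup.card_top,
    eq_comm] at this

end CokerMap

theorem stmt11_general {A V M B : Type*} [AddCommGroup A] [AddCommGroup V] [AddCommGroup M]
    [AddCommGroup B] [Finite A]
    (α : A →+ V) (β : V →+ M) (γ : M →+ B)
    (hα : Function.Injective α) (hexV : α.range = β.ker) (hexM : β.range = γ.ker)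
    (hγ : Function.Surjective γ)
    (φA : A →+ A) (φV : V →+ V) (φM : M →+ M) (φB : B →+ B)
    (hcα : ∀ a : A, α (φA a) = φV (α a))
    (hcβ : ∀ v : V, β (φV v) = φM (β v))
    (hcγ : ∀ x : M, γ (φM x) = φB (γ x))
    (hB : Nat.card φB.ker = Nat.card (B ⧸ φB.range))
    (hVinj : Function.Injective φV) (hMinj : Function.Injective φM) :
    Nat.card (V ⧸ φV.range) = Nat.card (M ⧸ φM.range) := by
  have hker : β.ker ≤ φV.range := ker_le_range_of_comm_of_finite hα hexV hcα hVinj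
  refine (cokerMap β hcβ).card_eq_of_card_ker_eq_card_coker ?_
  rw [card_ker_cokerMap hker hexM hγ hcβ hcγ hMinj, hB, card_coker_cokerMap hexM hγ hcβ hcγ]

/-- Let `0 → A → V → M → B → 0` be an exact sequence of abelian groups equipped with a
compatible endomorphism `φ`, with `A` and `B` finite.  If `|ker φ| = |coker φ|` on `A`
and on `B`, and `φ` is injective on `V` and on `M` with finite cokernels there, then
`|coker(φ : V → V)| = |coker(φ : M → M)|`. -/
theorem stmt11 {A V M B : Type*} [AddCommGroup A] [AddCommGroup V] [AddCommGroup M]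
    [AddCommGroup B] [Finite A] [Finite B]
    (α : A →+ V) (β : V →+ M) (γ : M →+ B)
    (hα : Function.Injective α) (hexV : α.range = β.ker) (hexM : β.range = γ.ker)
    (hγ : Function.Surjective γ)
    (φA : A →+ A) (φV : V →+ V) (φM : M →+ M) (φB : B →+ B)
    (hcα : ∀ a : A, α (φA a) = φV (α a))
    (hcβ : ∀ v : V, β (φV v) = φM (β v))
    (hcγ : ∀ x : M, γ (φM x) = φB (γ x))
    (hA : Nat.card φA.ker = Nat.card (A ⧸ φA.range))
    (hB : Nat.card φB.ker = Nat.card (B ⧸ φB.range))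
    (hVinj : Function.Injective φV) (hMinj : Function.Injective φM)
    (hVfin : Finite (V ⧸ φV.range)) (hMfin : Finite (M ⧸ φM.range)) :
    Nat.card (V ⧸ φV.range) = Nat.card (M ⧸ φM.range) :=
  stmt11_general α β γ hα hexV hexM hγ φA φV φM φB hcα hcβ hcγ hB hVinj hMinj
end
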